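/- arXiv:0906.3270 — 7 statements merged into one kernel-verified Lean document; each statement's English description precedes it below -/
import Mathlib

section
/- Let (A, ⋆, α) be a hom-associative magma with β : A → A satisfying α ∘ β = id. Then for all a, b, x, y, z ∈ A: a ⋆ (b ⋆ (x ⋆ β(y ⋆ z))) = a ⋆ (b ⋆ (β(x ⋆ y) ⋆ z)). -/
/-!
Since `α` is surjective, hom-associativity lets one rebracket a product `p ⋆ (y ⋆ z)` for every
`p`, writing `p = α (β p)`. Doing this three times turns `a ⋆ (b ⋆ (u ⋆ v))` into
`α c ⋆ (α u ⋆ α v)` with `c` depending only on `a` and `b`. Applied to both sides, the identity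
becomes `α c ⋆ (α x ⋆ (y ⋆ z)) = α c ⋆ ((x ⋆ y) ⋆ α z)`, which is hom-associativity itself.
-/

section HomAssoc

variable {A : Type*} (star : A → A → A) (α β : A → A)
  (hassoc : ∀ x y z, star (α x) (star y z) = star (star x y) (α z))
  (hβ : ∀ a, α (β a) = a)

include hassoc hβ

theorem star_star_eq_star_beta (p y z : A) :
    star p (star y z) = star (star (β p) y) (α z) := by
  rw [← hassoc, hβ]

theorem star_star_star_eq (a b u v : A) :
    star a (star b (star u v)) =
      star (α (star (β (β a)) (β b))) (star (α u) (α v)) := by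
  rw [star_star_eq_star_beta star α β hassoc hβ b, star_star_eq_star_beta star α β hassoc hβ a,
    star_star_eq_star_beta star α β hassoc hβ (β a), hassoc]

end HomAssoc

theorem homAssoc_ass1 {A : Type*} (star : A → A → A) (α β : A → A)
    (hassoc : ∀ x y z, star (α x) (star y z) = star (star x y) (α z))
    (hβ : ∀ a, α (β a) = a) :
    ∀ a b x y z, star a (star b (star x (β (star y z)))) =
      star a (star b (star (β (star x y)) z)) := by
  intro a b x y z
  rw [star_star_star_eq star α β hassoc hβ, star_star_star_eq star α β hassoc hβ, hβ, hβ, hassoc x y z]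
end

section
/- Let (A, ⋆, α) be a hom-associative magma with β : A → A satisfying α ∘ β = id. Then for all a, b, x, y, z ∈ A: a ⋆ ((x ⋆ β(y ⋆ z)) ⋆ b) = a ⋆ ((β(x ⋆ y) ⋆ z) ⋆ b). -/
/-! Since `α` has the right inverse `β`, hom-associativity can be applied in either direction at
any position: `a ⋆ (y ⋆ z) = (β a ⋆ y) ⋆ α z` and `(x ⋆ y) ⋆ b = α x ⋆ (y ⋆ β b)`. Rewriting
with these, both sides reduce to the normal form `((β (β a) ⋆ x) ⋆ α y) ⋆ α (z ⋆ β b)`. -/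

def HomAssociative {A : Type*} (star : A → A → A) (α : A → A) : Prop :=
  ∀ x y z, star (α x) (star y z) = star (star x y) (α z)

namespace HomAssociative

variable {A : Type*} {star : A → A → A} {α β : A → A}

theorem mul_mul_eq_mul_mul_apply (h : HomAssociative star α) (hβ : Function.RightInverse β α)
    (a y z : A) :
    star a (star y z) = star (star (β a) y) (α z) := by
  rw [← h, hβ]

theorem mul_mul_eq_apply_mul_mul (h : HomAssociative star α) (hβ : Function.RightInverse β α)
    (x y b : A) :
    star (star x y) b = star (α x) (star y (β b)) := by
  rw [h, hβ]

theorem mul_mul_mul_eq (h : HomAssociative star α) (hβ : Function.RightInverse β α)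
    (a x y w : A) :
    star a (star (star x y) w) = star (star (star (β (β a)) x) (α y)) (α w) := by
  rw [h.mul_mul_eq_mul_mul_apply hβ a, h.mul_mul_eq_mul_mul_apply hβ (β a)]

theorem mul_mul_mul_apply_eq (h : HomAssociative star α) (hβ : Function.RightInverse β α)
    (u y z b : A) :
    star (star u (star y z)) (α b) = star (star u (α y)) (α (star z (β b))) := by
  rw [← h, h.mul_mul_eq_apply_mul_mul hβ y z b, h]

end HomAssociative

theorem homAssoc_ass2 {A : Type*} (star : A → A → A) (α β : A → A)
    (hassoc : ∀ x y z, star (α x) (star y z) = star (star x y) (α z))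
    (hβ : ∀ a, α (β a) = a) :
    ∀ a b x y z, star a (star (star x (β (star y z))) b) =
      star a (star (star (β (star x y)) z) b) := by
  have h : HomAssociative star α := hassoc
  intro a b x y z
  calc star a (star (star x (β (star y z))) b)
      = star (star (star (β (β a)) x) (star y z)) (α b) := by
        rw [h.mul_mul_mul_eq hβ, hβ]
    _ = star (star (star (β (β a)) x) (α y)) (α (star z (β b))) :=
        h.mul_mul_mul_apply_eq hβ _ _ _ _
    _ = star a (star (star x y) (star z (β b))) := (h.mul_mul_mul_eq hβ _ _ _ _).symm
    _ = star a (star (star (β (star x y)) z) b) := by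
        rw [h.mul_mul_eq_apply_mul_mul hβ (β (star x y)), hβ]
end

section
/- Let (A, ⋆, α) be a hom-associative magma with β : A → A satisfying α ∘ β = id. Then for all a, b, x, y, z ∈ A: ((x ⋆ β(y ⋆ z)) ⋆ b) ⋆ a = ((β(x ⋆ y) ⋆ z) ⋆ b) ⋆ a. -/
/-! Surjectivity of `α` lets every product `(p ⋆ q) ⋆ a` be reassociated as `α p ⋆ (q ⋆ β a)`.
Doing this three times and reassociating back once shows that `((p ⋆ q) ⋆ b) ⋆ a` depends on
`p, q` only through `α p ⋆ α q`. For the two sides of the theorem this product is `α x ⋆ (y ⋆ z)`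
and `(x ⋆ y) ⋆ α z`, which agree by hom-associativity. -/

section HomAssoc

variable {A : Type*} {star : A → A → A} {α β : A → A}

theorem star_star_eq_of_rightInverse
    (hassoc : ∀ x y z, star (α x) (star y z) = star (star x y) (α z))
    (hβ : Function.RightInverse β α) (p q a : A) :
    star (star p q) a = star (α p) (star q (β a)) := by
  rw [hassoc, hβ a]

theorem star_star_star_eq_of_rightInverse
    (hassoc : ∀ x y z, star (α x) (star y z) = star (star x y) (α z))
    (hβ : Function.RightInverse β α) (p q a b : A) :
    star (star (star p q) b) a = star (star (α p) (α q)) (α (star (β b) (β (β a)))) := by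
  rw [star_star_eq_of_rightInverse hassoc hβ p q b, star_star_eq_of_rightInverse hassoc hβ,
    star_star_eq_of_rightInverse hassoc hβ q, hassoc]

end HomAssoc

theorem homAssoc_ass3 {A : Type*} (star : A → A → A) (α β : A → A)
    (hassoc : ∀ x y z, star (α x) (star y z) = star (star x y) (α z))
    (hβ : ∀ a, α (β a) = a) :
    ∀ a b x y z, star (star (star x (β (star y z))) b) a =
      star (star (star (β (star x y)) z) b) a := by
  intro a b x y z
  rw [star_star_star_eq_of_rightInverse hassoc hβ, star_star_star_eq_of_rightInverse hassoc hβ,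
    hβ, hβ, hassoc]
end

section
/- Let (A, ⋆, α) be a hom-associative magma with α surjective. Then either A is strongly degenerate (there exist a ≠ b with x ⋆ a = x ⋆ b and a ⋆ x = b ⋆ x for all x), or A is a twist: there exists an associative binary operation · on A such that x ⋆ y = α(x · y) for all x, y ∈ A. -/
/-!
Fix a section `β` of `α`. The twist `x · y := β (x ⋆ y)` always satisfies `x ⋆ y = α (x · y)`,
and it is associative unless `p := β (x ⋆ y) ⋆ z` and `q := x ⋆ β (y ⋆ z)` differ for some
`x, y, z`. Hom-associativity, used together with `α ∘ β = id` to move `α` across brackets in both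
directions, shows that `p ⋆ s` and `q ⋆ s`, as well as `s ⋆ p` and `s ⋆ q`, can never be told apart
by a further multiplication. So either one of these pairs is already a pair of distinct
indistinguishable elements, or `p` and `q` themselves are.
-/

section Magma

variable {A : Type*} (op : A → A → A)

local infixl:70 " ⋆ " => op

def Indistinguishable (a b : A) : Prop :=
  (∀ x, x ⋆ a = x ⋆ b) ∧ (∀ x, a ⋆ x = b ⋆ x)

def IsStronglyDegenerate : Prop :=
  ∃ a b : A, a ≠ b ∧ Indistinguishable op a b

variable {op}

theorem Indistinguishable.symm {a b : A} (h : Indistinguishable op a b) :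
    Indistinguishable op b a :=
  ⟨fun x => (h.1 x).symm, fun x => (h.2 x).symm⟩

theorem Indistinguishable.of_flip {a b : A} (h : Indistinguishable (flip op) a b) :
    Indistinguishable op a b :=
  ⟨h.2, h.1⟩

theorem isStronglyDegenerate_of_indistinguishable_products {p q : A} (hpq : p ≠ q)
    (hright : ∀ s, Indistinguishable op (p ⋆ s) (q ⋆ s))
    (hleft : ∀ s, Indistinguishable op (s ⋆ p) (s ⋆ q)) :
    IsStronglyDegenerate op := by
  by_cases hr : ∃ s, p ⋆ s ≠ q ⋆ s
  · obtain ⟨s, hs⟩ := hr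
    exact ⟨_, _, hs, hright s⟩
  by_cases hl : ∃ s, s ⋆ p ≠ s ⋆ q
  · obtain ⟨s, hs⟩ := hl
    exact ⟨_, _, hs, hleft s⟩
  push Not at hr hl
  exact ⟨p, q, hpq, hl, hr⟩

end Magma

section HomAssociative

variable {A : Type*} {op : A → A → A} {α β : A → A}

local infixl:70 " ⋆ " => op

variable (hassoc : ∀ x y z : A, op (α x) (op y z) = op (op x y) (α z))
  (hβ : Function.RightInverse β α)
include hassoc hβ

theorem op_op_eq_of_rightInverse (x y z : A) : x ⋆ (y ⋆ z) = β x ⋆ y ⋆ α z := by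
  rw [← hassoc, hβ]

theorem op_op_eq_of_rightInverse' (x y z : A) : x ⋆ y ⋆ z = α x ⋆ (y ⋆ β z) := by
  rw [hassoc, hβ]

theorem indistinguishable_bracketings_op_right (x y z s : A) :
    Indistinguishable op (β (x ⋆ y) ⋆ z ⋆ s) (x ⋆ β (y ⋆ z) ⋆ s) := by
  have rebracket := op_op_eq_of_rightInverse hassoc hβ
  have rebracket' := op_op_eq_of_rightInverse' hassoc hβ
  constructor
  · intro t
    calc t ⋆ (β (x ⋆ y) ⋆ z ⋆ s)
        = β t ⋆ (x ⋆ y) ⋆ α (z ⋆ β s) := by rw [rebracket', hβ, rebracket]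
      _ = α (β (β t) ⋆ x) ⋆ (α y ⋆ (z ⋆ β s)) := by rw [rebracket (β t), hassoc]
      _ = β (β t) ⋆ x ⋆ (y ⋆ z) ⋆ α s := by rw [hassoc y, hβ, hassoc]
      _ = t ⋆ (x ⋆ β (y ⋆ z) ⋆ s) := by rw [← hβ (y ⋆ z), ← rebracket, rebracket t, hβ]
  · intro t
    calc β (x ⋆ y) ⋆ z ⋆ s ⋆ t
        = α (x ⋆ y) ⋆ (α z ⋆ (β s ⋆ β (β t))) := by
          rw [rebracket' (β (x ⋆ y)) z s, hβ, rebracket' (x ⋆ y), rebracket' z]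
      _ = α (α x) ⋆ (y ⋆ z ⋆ (β s ⋆ β (β t))) := by rw [hassoc, ← hassoc x y z, ← hassoc]
      _ = x ⋆ β (y ⋆ z) ⋆ s ⋆ t := by
          rw [rebracket' x (β (y ⋆ z)) s, rebracket' (α x), rebracket' (β (y ⋆ z)), hβ]

/-- The opposite magma is again hom-associative, and it exchanges the two bracketings. -/
theorem indistinguishable_bracketings_op_left (x y z s : A) :
    Indistinguishable op (s ⋆ (β (x ⋆ y) ⋆ z)) (s ⋆ (x ⋆ β (y ⋆ z))) :=
  (indistinguishable_bracketings_op_right (op := flip op) (fun x y z => (hassoc z y x).symm) hβ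
    z y x s).of_flip.symm

end HomAssociative

theorem homAssoc_twist_or_degenerate {A : Type*} (star : A → A → A) (α : A → A)
    (hassoc : ∀ x y z, star (α x) (star y z) = star (star x y) (α z))
    (hsurj : Function.Surjective α) :
    (∃ a b : A, a ≠ b ∧ (∀ x, star x a = star x b) ∧ (∀ x, star a x = star b x)) ∨
    (∃ mul : A → A → A, (∀ x y z, mul (mul x y) z = mul x (mul y z)) ∧
      ∀ x y, star x y = α (mul x y)) := by
  obtain ⟨β, hβ⟩ := hsurj.hasRightInverse
  by_cases htwist : ∀ x y z, star (β (star x y)) z = star x (β (star y z))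
  · exact Or.inr ⟨fun x y => β (star x y), fun x y z => congrArg β (htwist x y z),
      fun x y => (hβ _).symm⟩
  · push Not at htwist
    obtain ⟨x, y, z, hne⟩ := htwist
    exact Or.inl <| isStronglyDegenerate_of_indistinguishable_products hne
      (indistinguishable_bracketings_op_right hassoc hβ x y z)
      (indistinguishable_bracketings_op_left hassoc hβ x y z)
end

section
/- Let (A, ⋆, α) be a hom-associative magma with α surjective and suppose A is not strongly degenerate (there do not exist a ≠ b with x ⋆ a = x ⋆ b and a ⋆ x = b ⋆ x for all x). Then α is injective, hence bijective. -/
/-!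
Strong non-degeneracy is an extensionality principle: `a = b` as soon as `a` and `b` have the
same products with everything on both sides. If the twisting map satisfies `α a = α b`,
hom-associativity and surjectivity of `α` give `w ⋆ (y ⋆ a) = w ⋆ (y ⋆ b)` and
`(a ⋆ y) ⋆ w = (b ⋆ y) ⋆ w`; two applications of extensionality then bring this down to
`u ⋆ a = u ⋆ b` and `a ⋆ v = b ⋆ v`, and a last one to `a = b`. Each step has a mirror image,
obtained by passing to the opposite magma `flip μ`.
-/

section HomAssoc

variable {A : Type*}

def IsHomAssoc (μ : A → A → A) (α : A → A) : Prop :=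
  ∀ x y z, μ (α x) (μ y z) = μ (μ x y) (α z)

def LeftIndist (μ : A → A → A) (a b : A) : Prop :=
  ∀ x, μ x a = μ x b

def IsNondegenerate (μ : A → A → A) : Prop :=
  ∀ a b, LeftIndist μ a b → LeftIndist (flip μ) a b → a = b

theorem IsNondegenerate.flip {μ : A → A → A} (hμ : IsNondegenerate μ) :
    IsNondegenerate (flip μ) :=
  fun a b hl hr => hμ a b hr hl

theorem leftIndist_iff_of_surjective {μ : A → A → A} {α : A → A}
    (hα : Function.Surjective α) {c d : A} : LeftIndist μ c d ↔ ∀ u, μ (α u) c = μ (α u) d :=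
  hα.forall

namespace IsHomAssoc

variable {μ : A → A → A} {α : A → A}

theorem flip (h : IsHomAssoc μ α) : IsHomAssoc (flip μ) α :=
  fun x y z => (h z y x).symm

variable (h : IsHomAssoc μ α) (hα : Function.Surjective α) {a b : A}
include h hα

theorem leftIndist_mul_of_twist_eq (hab : α a = α b) (y : A) :
    LeftIndist μ (μ y a) (μ y b) :=
  (leftIndist_iff_of_surjective hα).2 fun u => by rw [h, h, hab]

theorem mul_mul_eq_of_twist_eq (hμ : IsNondegenerate μ) (hab : α a = α b) (u v : A) :
    μ (α u) (μ a v) = μ (α u) (μ b v) := by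
  apply hμ
  · refine (leftIndist_iff_of_surjective hα).2 fun t => ?_
    rw [h u a v, h u b v, h, h, h.leftIndist_mul_of_twist_eq hα hab u t]
  · refine (leftIndist_iff_of_surjective (μ := _root_.flip μ) hα).2 fun t => ?_
    change μ (μ (α u) (μ a v)) (α t) = μ (μ (α u) (μ b v)) (α t)
    rw [← h, ← h]
    exact congrArg (μ _) (h.flip.leftIndist_mul_of_twist_eq hα hab v t)

theorem leftIndist_of_twist_eq (hμ : IsNondegenerate μ) (hab : α a = α b) :
    LeftIndist μ a b := fun u => by
  apply hμ _ _ (h.leftIndist_mul_of_twist_eq hα hab u)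
  refine (leftIndist_iff_of_surjective (μ := _root_.flip μ) hα).2 fun v => ?_
  change μ (μ u a) (α v) = μ (μ u b) (α v)
  rw [← h, ← h, h.mul_mul_eq_of_twist_eq hα hμ hab]

theorem injective_of_surjective (hμ : IsNondegenerate μ) :
    Function.Injective α := fun _ _ hab =>
  hμ _ _ (h.leftIndist_of_twist_eq hα hμ hab) (h.flip.leftIndist_of_twist_eq hα hμ.flip hab)

end IsHomAssoc

end HomAssoc

theorem homAssoc_surjective_bijective {A : Type*} (star : A → A → A) (α : A → A)
    (hassoc : ∀ x y z, star (α x) (star y z) = star (star x y) (α z))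
    (hsurj : Function.Surjective α)
    (hnd : ¬ ∃ a b : A, a ≠ b ∧ (∀ x, star x a = star x b) ∧ (∀ x, star a x = star b x)) :
    Function.Bijective α := by
  have hstar : IsNondegenerate star := fun a b hl hr => by
    by_contra hne
    exact hnd ⟨a, b, hne, hl, hr⟩
  exact ⟨IsHomAssoc.injective_of_surjective hassoc hsurj hstar, hsurj⟩
end

section
/- Let (A, ⋆, α, 1) be a hom-associative magma with a two-sided unit (1 ⋆ x = x ⋆ 1 = x for all x) and α bijective. Then (A, ⋆) is not strongly degenerate, and hence A is a twist of an associative structure. -/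
/-!
Hom-associativity with one argument specialised to the unit `e` shows that `α` is left and right
multiplication by `α e`, and that `α (x ⋆ y) = α x ⋆ y = x ⋆ α y`. When `α` is bijective these
laws let `α⁻¹` slide onto either factor, so `x · y := α⁻¹ (x ⋆ y)` is associative: both bracketings
reduce to the two sides of the hom-associativity law at `α⁻¹ x, y, α⁻¹ z`.
-/

namespace HomAssoc

variable {A : Type*} {star : A → A → A} {α : A → A} {e : A}

def IsHomAssoc (star : A → A → A) (α : A → A) : Prop :=
  ∀ x y z, star (α x) (star y z) = star (star x y) (α z)

theorem eq_of_forall_star_left_eq (hl : ∀ x, star e x = x) {a b : A}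
    (h : ∀ x, star x a = star x b) : a = b := by
  rw [← hl a, h e, hl b]

theorem apply_eq_star_apply_unit (hassoc : IsHomAssoc star α)
    (hr : ∀ x, star x e = x) (x : A) : α x = star x (α e) := by
  simpa only [hr] using hassoc x e e

theorem apply_eq_apply_unit_star (hassoc : IsHomAssoc star α)
    (hl : ∀ x, star e x = x) (x : A) : α x = star (α e) x := by
  simpa only [hl] using (hassoc e e x).symm

theorem apply_star_eq_star_apply (hassoc : IsHomAssoc star α)
    (hl : ∀ x, star e x = x) (x y : A) :
    α (star x y) = star x (α y) := by
  simpa only [hl, ← apply_eq_apply_unit_star hassoc hl] using hassoc e x y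

theorem apply_star_eq_apply_star (hassoc : IsHomAssoc star α)
    (hr : ∀ x, star x e = x) (x y : A) :
    α (star x y) = star (α x) y := by
  simpa only [hr, ← apply_eq_star_apply_unit hassoc hr] using (hassoc x y e).symm

theorem exists_assoc_twist_of_bijective (hassoc : IsHomAssoc star α)
    (hleft : ∀ x y, α (star x y) = star (α x) y) (hright : ∀ x y, α (star x y) = star x (α y))
    (hbij : Function.Bijective α) :
    ∃ mul : A → A → A, (∀ x y z, mul (mul x y) z = mul x (mul y z)) ∧
      ∀ x y, star x y = α (mul x y) := by
  obtain ⟨inv, hinv⟩ : ∃ inv : A → A, ∀ x, α (inv x) = x :=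
    ⟨Function.surjInv hbij.2, Function.rightInverse_surjInv hbij.2⟩
  have hinv_left (x y : A) : inv (star x y) = star (inv x) y :=
    hbij.1 (by rw [hinv, hleft, hinv])
  have hinv_right (x y : A) : inv (star x y) = star x (inv y) :=
    hbij.1 (by rw [hinv, hright, hinv])
  refine ⟨fun x y => inv (star x y), fun x y z => ?_, fun x y => (hinv _).symm⟩
  have h := hassoc (inv x) y (inv z)
  rw [hinv, hinv] at h
  show inv (star (inv (star x y)) z) = inv (star x (inv (star y z)))
  rw [hinv_left x y, hinv_right y z, h]

end HomAssoc

open HomAssoc in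
theorem homAssoc_unital_bijective_twist {A : Type*} (star : A → A → A) (α : A → A) (e : A)
    (hassoc : ∀ x y z, star (α x) (star y z) = star (star x y) (α z))
    (hunit : ∀ x, star e x = x ∧ star x e = x)
    (hbij : Function.Bijective α) :
    (¬ ∃ a b : A, a ≠ b ∧ (∀ x, star x a = star x b) ∧ (∀ x, star a x = star b x)) ∧
    (∃ mul : A → A → A, (∀ x y z, mul (mul x y) z = mul x (mul y z)) ∧
      ∀ x y, star x y = α (mul x y)) := by
  have hl (x : A) : star e x = x := (hunit x).1
  have hr (x : A) : star x e = x := (hunit x).2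
  refine ⟨fun ⟨a, b, hab, hright, _⟩ => hab (eq_of_forall_star_left_eq hl hright), ?_⟩
  exact exists_assoc_twist_of_bijective hassoc (apply_star_eq_apply_star hassoc hr)
    (apply_star_eq_star_apply hassoc hl) hbij
end

section
/- Let (A, ⋆, α) be a hom-associative k-algebra over a commutative ring k, with (A, ⋆) not strongly degenerate, and let (A[[t]], μ_t, α_t) be a formal hom-associative deformation of (A, ⋆, α). Then (A[[t]], μ_t) is not strongly degenerate as a k[[t]]-algebra: for every nonzero a ∈ A[[t]] there exists b ∈ A with μ_t(b, a) ≠ 0 or μ_t(a, b) ≠ 0. -/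
/-!
If `a_N` is the lowest nonzero coefficient of `a ∈ A[[t]]` and `b ∈ A`, then the `t^N`
coefficients of `μ_t(b, a)` and `μ_t(a, b)` are `b ⋆ a_N` and `a_N ⋆ b`: every correction term
`μ_i` with `i ≥ 1` lands in higher order. Non-degeneracy of `⋆` makes one of them nonzero.
-/

section

open Finset

variable {k A : Type*} [CommSemiring k] [AddCommMonoid A] [Module k A]

/-- `μ_t = ∑ tⁱ μ i` on `A[[t]]`, power series being encoded as coefficient sequences. -/
def starProduct (μ : ℕ → A →ₗ[k] A →ₗ[k] A) (a b : ℕ → A) (n : ℕ) : A :=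
  ∑ i ∈ range (n + 1), ∑ j ∈ range (n - i + 1), μ i (a j) (b (n - i - j))

theorem exists_ne_zero_and_forall_lt_eq_zero {a : ℕ → A} (ha : a ≠ 0) :
    ∃ N, a N ≠ 0 ∧ ∀ m < N, a m = 0 := by
  classical
  have hex : ∃ n, a n ≠ 0 := Function.ne_iff.mp ha
  exact ⟨Nat.find hex, Nat.find_spec hex, fun m hm => not_not.mp (Nat.find_min hex hm)⟩

theorem starProduct_add_eq_of_forall_lt_eq_zero (μ : ℕ → A →ₗ[k] A →ₗ[k] A) {a b : ℕ → A}
    {N K : ℕ} (ha : ∀ m < N, a m = 0) (hb : ∀ m < K, b m = 0) :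
    starProduct μ a b (N + K) = μ 0 (a N) (b K) := by
  have vanish : ∀ i j, i ≤ N + K → j ≤ N + K - i → (i ≠ 0 ∨ j ≠ N) →
      μ i (a j) (b (N + K - i - j)) = 0 := by
    intro i j hi hj hij
    rcases lt_or_ge j N with hjN | hjN
    · simp [ha j hjN]
    · have : N + K - i - j < K := by omega
      simp [hb _ this]
  unfold starProduct
  rw [sum_eq_single 0, sum_eq_single N]
  · simp
  · exact fun j hj hjN =>
      vanish 0 j (Nat.zero_le _) (Nat.lt_succ_iff.mp (mem_range.mp hj)) (Or.inr hjN)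
  · simp
  · exact fun i hi hi0 => sum_eq_zero fun j hj =>
      vanish i j (Nat.lt_succ_iff.mp (mem_range.mp hi)) (Nat.lt_succ_iff.mp (mem_range.mp hj))
        (Or.inl hi0)
  · simp

end

theorem deformation_preserves_nondegeneracy_general
    {k : Type*} [CommRing k] {A : Type*} [AddCommGroup A] [Module k A]
    (μfam : ℕ → (A →ₗ[k] A →ₗ[k] A))
    -- (A, ⋆) not strongly degenerate:
    (hnd : ∀ a : A, a ≠ 0 → ∃ b : A, μfam 0 b a ≠ 0 ∨ μfam 0 a b ≠ 0)
    -- deformed multiplication μ_t and twisting α_t on A[[t]] = (ℕ → A):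
    (M : (ℕ → A) → (ℕ → A) → (ℕ → A))
    (hM : ∀ a b n, M a b n =
      ∑ i ∈ Finset.range (n + 1), ∑ j ∈ Finset.range (n - i + 1),
        μfam i (a j) (b (n - i - j))) :
    ∀ a : ℕ → A, a ≠ 0 →
      ∃ b : A, M (fun n => if n = 0 then b else 0) a ≠ 0 ∨
        M a (fun n => if n = 0 then b else 0) ≠ 0 := by
  intro a ha
  obtain ⟨N, haN, hlow⟩ := exists_ne_zero_and_forall_lt_eq_zero ha
  obtain ⟨b, hb⟩ := hnd (a N) haN
  have hM' : M = starProduct μfam := funext₂ fun a b => funext (hM a b)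
  have hconst : ∀ m < 0, (if m = 0 then b else 0) = 0 := fun m hm => absurd hm m.not_lt_zero
  have hleft := starProduct_add_eq_of_forall_lt_eq_zero μfam hconst hlow
  have hright := starProduct_add_eq_of_forall_lt_eq_zero μfam hlow hconst
  rw [zero_add, if_pos rfl] at hleft
  rw [add_zero, if_pos rfl] at hright
  refine ⟨b, hb.imp (fun h hzero => h ?_) (fun h hzero => h ?_)⟩
  · rw [← hleft, ← hM', hzero, Pi.zero_apply]
  · rw [← hright, ← hM', hzero, Pi.zero_apply]

theorem deformation_preserves_nondegeneracy
    {k : Type*} [CommRing k] {A : Type*} [AddCommGroup A] [Module k A]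
    (μfam : ℕ → (A →ₗ[k] A →ₗ[k] A)) (αfam : ℕ → (A →ₗ[k] A))
    -- (A, ⋆, α) with ⋆ = μfam 0, α = αfam 0, hom-associative:
    (hassoc : ∀ x y z : A, μfam 0 (αfam 0 x) (μfam 0 y z) = μfam 0 (μfam 0 x y) (αfam 0 z))
    -- (A, ⋆) not strongly degenerate:
    (hnd : ∀ a : A, a ≠ 0 → ∃ b : A, μfam 0 b a ≠ 0 ∨ μfam 0 a b ≠ 0)
    -- deformed multiplication μ_t and twisting α_t on A[[t]] = (ℕ → A):
    (M : (ℕ → A) → (ℕ → A) → (ℕ → A)) (F : (ℕ → A) → (ℕ → A))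
    (hM : ∀ a b n, M a b n =
      ∑ i ∈ Finset.range (n + 1), ∑ j ∈ Finset.range (n - i + 1),
        μfam i (a j) (b (n - i - j)))
    (hF : ∀ a n, F a n = ∑ i ∈ Finset.range (n + 1), αfam i (a (n - i)))
    -- hom-associativity of the deformation:
    (hdef : ∀ a b c : ℕ → A, M (F a) (M b c) = M (M a b) (F c)) :
    ∀ a : ℕ → A, a ≠ 0 →
      ∃ b : A, M (fun n => if n = 0 then b else 0) a ≠ 0 ∨
        M a (fun n => if n = 0 then b else 0) ≠ 0 :=
  deformation_preserves_nondegeneracy_general μfam hnd M hM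
end
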